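/- Let k1, k2, k3, k4 be integers with each ki ≥ 3, at most two of them equal to 3, and k1+k2+k3+k4 ≥ 18. Then the sum 1/k1 + 1/k2 + 1/k3 + 1/k4 > 1 (in ℚ) holds if and only if exactly two of the ki equal 3 and the remaining two (in sorted order a ≤ b) satisfy (a,b) ∈ {(4,8),(4,9),(4,10),(4,11),(5,7)}. -/

import Mathlib

/-!
Sort the four integers as `a ≤ b ≤ c ≤ d`. Comparing each reciprocal with that of the
smallest remaining term bounds them one at a time: `1 < 4/a` forces `a = 3`, then
`1 < 1/3 + 3/b` forces `b ≤ 4`, `1 < 2/3 + 2/c` forces `c ≤ 5`, and since `c ≥ 4`,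
`1 < 1/3 + 1/3 + 1/4 + 1/d` forces `d ≤ 11`. Among the few remaining quadruples, the bound
`a + b + c + d ≥ 18` discards the other solutions, such as `(3, 4, 4, 5)` and `(3, 3, 5, 6)`.
-/

lemma one_div_intCast_le_one_div {m k : ℤ} (hm : 0 < m) (h : m ≤ k) :
    (1 : ℚ) / k ≤ 1 / m :=
  one_div_le_one_div_of_le (by exact_mod_cast hm) (by exact_mod_cast h)

theorem Multiset.exists_eq_of_card_eq_four {α : Type*} [LinearOrder α] {s : Multiset α}
    (hs : card s = 4) : ∃ a b c d, a ≤ b ∧ b ≤ c ∧ c ≤ d ∧ s = {a, b, c, d} := by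
  have hlen : (s.sort (· ≤ ·)).length = 4 := by rw [length_sort, hs]
  have hsorted := s.pairwise_sort (· ≤ ·)
  have hs_eq := s.sort_eq (· ≤ ·)
  match hl : s.sort (· ≤ ·), hlen with
  | [a, b, c, d], _ =>
    rw [hl] at hsorted hs_eq
    simp only [List.pairwise_cons, List.mem_cons, List.not_mem_nil] at hsorted
    exact ⟨a, b, c, d, hsorted.1 b (by simp), hsorted.2.1 c (by simp),
      hsorted.2.2.1 d (by simp), hs_eq.symm⟩

theorem eq_three_of_one_lt_sum_one_div_of_sorted {a b c d : ℤ} (ha : 3 ≤ a) (hab : a ≤ b)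
    (hbc : b ≤ c) (hcd : c ≤ d) (hc : 4 ≤ c) (hsum : 18 ≤ a + b + c + d)
    (h : 1 < (1 : ℚ) / a + 1 / b + 1 / c + 1 / d) :
    a = 3 ∧ b = 3 ∧ ((c, d) = (4, 8) ∨ (c, d) = (4, 9) ∨ (c, d) = (4, 10) ∨
      (c, d) = (4, 11) ∨ (c, d) = (5, 7)) := by
  have ha_inv := one_div_intCast_le_one_div (by norm_num) ha
  have hb_inv := one_div_intCast_le_one_div (by norm_num) (ha.trans hab)
  have hc_inv := one_div_intCast_le_one_div (by norm_num) hc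
  have ha3 : a ≤ 3 := by
    by_contra!
    have := one_div_intCast_le_one_div (m := 4) (k := a) (by norm_num) (by omega)
    have := one_div_intCast_le_one_div (m := 4) (k := b) (by norm_num) (by omega)
    have := one_div_intCast_le_one_div (m := 4) (k := c) (by norm_num) (by omega)
    have := one_div_intCast_le_one_div (m := 4) (k := d) (by norm_num) (by omega)
    linarith
  have hb4 : b ≤ 4 := by
    by_contra!
    have := one_div_intCast_le_one_div (m := 5) (k := b) (by norm_num) (by omega)
    have := one_div_intCast_le_one_div (m := 5) (k := c) (by norm_num) (by omega)
    have := one_div_intCast_le_one_div (m := 5) (k := d) (by norm_num) (by omega)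
    linarith
  have hc5 : c ≤ 5 := by
    by_contra!
    have := one_div_intCast_le_one_div (m := 6) (k := c) (by norm_num) (by omega)
    have := one_div_intCast_le_one_div (m := 6) (k := d) (by norm_num) (by omega)
    linarith
  have hd11 : d ≤ 11 := by
    by_contra!
    have := one_div_intCast_le_one_div (m := 12) (k := d) (by norm_num) (by omega)
    linarith
  obtain rfl : a = 3 := le_antisymm ha3 ha
  interval_cases b <;> interval_cases c <;> interval_cases d <;> norm_num at *

theorem Multiset.one_lt_sum_one_div_iff {s : Multiset ℤ} (hcard : card s = 4)
    (hge : ∀ k ∈ s, 3 ≤ k) (hcount : s.count 3 ≤ 2) (hsum : 18 ≤ s.sum) :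
    1 < (s.map fun k : ℤ => (1 : ℚ) / k).sum ↔
      ∃ a b : ℤ, a ≤ b ∧ s = {3, 3, a, b} ∧
        ((a, b) = (4, 8) ∨ (a, b) = (4, 9) ∨ (a, b) = (4, 10) ∨
         (a, b) = (4, 11) ∨ (a, b) = (5, 7)) := by
  constructor
  · intro h
    obtain ⟨a, b, c, d, hab, hbc, hcd, rfl⟩ := exists_eq_of_card_eq_four hcard
    simp only [insert_eq_cons, mem_cons, mem_singleton, forall_eq_or_imp, forall_eq] at hge
    have hc : 4 ≤ c := by
      by_contra!
      obtain ⟨rfl, rfl, rfl⟩ : a = 3 ∧ b = 3 ∧ c = 3 := by omega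
      simp at hcount
    simp only [insert_eq_cons, map_cons, map_singleton, sum_cons, sum_singleton] at h hsum
    obtain ⟨rfl, rfl, hcd'⟩ := eq_three_of_one_lt_sum_one_div_of_sorted hge.1 hab hbc hcd hc
      (by linarith) (by linarith)
    exact ⟨c, d, hcd, rfl, hcd'⟩
  · rintro ⟨a, b, -, rfl, hab⟩
    rcases hab with hab | hab | hab | hab | hab <;>
      obtain ⟨rfl, rfl⟩ := Prod.mk.inj hab <;> norm_num

/-- Classification (unsorted version): for integers kᵢ ≥ 3 with at most two equal to 3
and sum ≥ 18, the reciprocal sum exceeds 1 iff exactly two of them equal 3 and the other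
two, in sorted order, form one of the pairs (4,8), (4,9), (4,10), (4,11), (5,7). -/
theorem stmt_1 (k1 k2 k3 k4 : ℤ)
    (h1 : 3 ≤ k1) (h2 : 3 ≤ k2) (h3 : 3 ≤ k3) (h4 : 3 ≤ k4)
    (htwo : ([k1, k2, k3, k4].count 3) ≤ 2)
    (hsum : 18 ≤ k1 + k2 + k3 + k4) :
    1 < (1 : ℚ) / k1 + 1 / k2 + 1 / k3 + 1 / k4 ↔
      ∃ a b : ℤ, a ≤ b ∧ ({k1, k2, k3, k4} : Multiset ℤ) = {3, 3, a, b} ∧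
        ((a, b) = (4, 8) ∨ (a, b) = (4, 9) ∨ (a, b) = (4, 10) ∨
         (a, b) = (4, 11) ∨ (a, b) = (5, 7)) := by
  have hrecip : (1 : ℚ) / k1 + 1 / k2 + 1 / k3 + 1 / k4 =
      (({k1, k2, k3, k4} : Multiset ℤ).map fun k : ℤ => (1 : ℚ) / k).sum := by
    simp only [Multiset.insert_eq_cons, Multiset.map_cons, Multiset.map_singleton,
      Multiset.sum_cons, Multiset.sum_singleton]
    ring
  rw [hrecip]
  refine Multiset.one_lt_sum_one_div_iff rfl ?_ ((Multiset.coe_count 3 _).trans_le htwo) ?_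
  · simp only [Multiset.insert_eq_cons, Multiset.mem_cons, Multiset.mem_singleton]
    rintro k (rfl | rfl | rfl | rfl) <;> assumption
  · simpa only [Multiset.insert_eq_cons, Multiset.sum_cons, Multiset.sum_singleton, add_assoc]
      using hsum
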